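/- arXiv:2509.08796 — 7 statements merged into one kernel-verified Lean document; each statement's English description precedes it below -/
import Mathlib

section
/- For infinite subsets L, M, N of ℕ, the Gasparis–Leung index satisfies the submultiplicativity inequality GL₁(L,N) ≤ GL₁(L,M) · GL₁(M,N). -/
/-- A Schreier set: a finite set `F` of naturals that is empty or satisfies `|F| ≤ min F`. -/
def IsSchreier (F : Finset ℕ) : Prop := ∀ h : F.Nonempty, F.card ≤ F.min' h

/-- `F < G` for finite sets of naturals: every element of `F` is below every element of `G`. -/
def FinsetLT (F G : Finset ℕ) : Prop := ∀ a ∈ F, ∀ b ∈ G, a < b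

/-- `A` can be covered by `m` consecutive Schreier sets `F 0 < F 1 < ⋯ < F (m-1)`. -/
def IsChainCover (A : Finset ℕ) (m : ℕ) : Prop :=
  ∃ F : Fin m → Finset ℕ, (∀ i, IsSchreier (F i)) ∧
    (∀ i j : Fin m, i < j → FinsetLT (F i) (F j)) ∧ ∀ a ∈ A, ∃ i, a ∈ F i

/-- The Schreier covering number `τ₁(A)`: the least number of consecutive Schreier sets
needed to cover the finite set `A` (with `τ₁(∅) = 0`). -/
noncomputable def tau1 (A : Finset ℕ) : ℕ := sInf {m | IsChainCover A m}

/-- `M(J)`: the elements of the infinite set `M` whose index (position, counted from `0`,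
in the increasing enumeration of `M`) belongs to the finite set `J`. -/
noncomputable def idxImage (M : Set ℕ) (J : Finset ℕ) : Finset ℕ :=
  J.image (Nat.nth (· ∈ M))

/-- The Gasparis–Leung index `GL₁(M,N) = sup {τ₁(M(J)) : J finite, N(J) ∈ S₁} ∈ ℕ ∪ {∞}`. -/
noncomputable def GL1 (M N : Set ℕ) : ℕ∞ :=
  ⨆ J ∈ {J : Finset ℕ | IsSchreier (idxImage N J)}, (tau1 (idxImage M J) : ℕ∞)

section Aux

lemma isSchreier_subset {F G : Finset ℕ} (hF : IsSchreier F) (hGF : G ⊆ F) : IsSchreier G := by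
  intro h
  calc G.card ≤ F.card := Finset.card_le_card hGF
    _ ≤ F.min' (h.mono hGF) := hF _
    _ ≤ G.min' h := Finset.min'_subset h hGF

lemma isSchreier_empty : IsSchreier ∅ := fun h => absurd h (by simp)

lemma isSchreier_singleton {a : ℕ} (ha : 1 ≤ a) : IsSchreier {a} := by
  intro h; simpa using ha

lemma isChainCover_mono {A : Finset ℕ} {m m' : ℕ} (h : IsChainCover A m) (hmm : m ≤ m') :
    IsChainCover A m' := by
  obtain ⟨F, hS, hlt, hcov⟩ := h
  refine ⟨fun i => if h : (i : ℕ) < m then F ⟨i, h⟩ else ∅, fun i => ?_, fun i j hij => ?_,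
    fun a ha => ?_⟩
  · dsimp only
    split
    · exact hS _
    · exact isSchreier_empty
  · dsimp only
    by_cases hi : (i : ℕ) < m
    · by_cases hj : (j : ℕ) < m
      · simp only [dif_pos hi, dif_pos hj]
        exact hlt _ _ hij
      · simp only [dif_neg hj]
        intro a _ b hb
        exact absurd hb (Finset.notMem_empty b)
    · simp only [dif_neg hi]
      intro a ha
      exact absurd ha (Finset.notMem_empty a)
  · obtain ⟨i, hi⟩ := hcov a ha
    refine ⟨⟨i, lt_of_lt_of_le i.isLt hmm⟩, ?_⟩
    simp only [dif_pos i.isLt]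
    exact hi

lemma isChainCover_of_one_le {A : Finset ℕ} (hA : ∀ a ∈ A, 1 ≤ a) : IsChainCover A A.card := by
  refine ⟨fun i => {(A.orderIsoOfFin rfl i : ℕ)}, fun i => ?_, fun i j hij => ?_, fun a ha => ?_⟩
  · exact isSchreier_singleton (hA _ (A.orderIsoOfFin rfl i).2)
  · intro a ha b hb
    simp only [Finset.mem_singleton] at ha hb
    subst ha; subst hb
    exact Subtype.coe_lt_coe.mpr ((A.orderIsoOfFin rfl).strictMono hij)
  · refine ⟨(A.orderIsoOfFin rfl).symm ⟨a, ha⟩, ?_⟩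
    simp

lemma isChainCover_of_tau1_le {A : Finset ℕ} {m : ℕ} (hA : ∀ a ∈ A, 1 ≤ a)
    (h : tau1 A ≤ m) : IsChainCover A m := by
  have hne : {k | IsChainCover A k}.Nonempty := ⟨A.card, isChainCover_of_one_le hA⟩
  exact isChainCover_mono (Nat.sInf_mem hne) h

lemma one_le_tau1_singleton {a : ℕ} (ha : 1 ≤ a) : 1 ≤ tau1 {a} := by
  rw [Nat.one_le_iff_ne_zero]
  intro h0
  rcases Nat.sInf_eq_zero.mp h0 with h | h
  · obtain ⟨F, -, -, hcov⟩ := h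
    obtain ⟨i, -⟩ := hcov a (Finset.mem_singleton_self a)
    exact i.elim0
  · have hmem : IsChainCover ({a} : Finset ℕ) ({a} : Finset ℕ).card :=
      isChainCover_of_one_le (by simpa using ha)
    have : (({a} : Finset ℕ).card) ∈ {m | IsChainCover ({a} : Finset ℕ) m} := hmem
    rw [h] at this
    exact this

lemma idxImage_one_le {L : Set ℕ} (hL : L.Infinite) (hL0 : 0 ∉ L) (J : Finset ℕ) :
    ∀ a ∈ idxImage L J, 1 ≤ a := by
  intro a ha
  simp only [idxImage, Finset.mem_image] at ha
  obtain ⟨j, -, rfl⟩ := ha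
  have hmem : Nat.nth (· ∈ L) j ∈ L := Nat.nth_mem_of_infinite hL j
  have : Nat.nth (· ∈ L) j ≠ 0 := fun h => hL0 (h ▸ hmem)
  omega

lemma tau1_le_GL1 {A B : Set ℕ} {J : Finset ℕ} (hJ : IsSchreier (idxImage B J)) :
    (tau1 (idxImage A J) : ℕ∞) ≤ GL1 A B :=
  le_iSup₂ (f := fun J (_ : J ∈ {J : Finset ℕ | IsSchreier (idxImage B J)}) =>
    (tau1 (idxImage A J) : ℕ∞)) J hJ

lemma one_le_GL1 {A B : Set ℕ} (hA : A.Infinite) (hB : B.Infinite)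
    (hA0 : 0 ∉ A) (hB0 : 0 ∉ B) : 1 ≤ GL1 A B := by
  have hJ : IsSchreier (idxImage B {0}) := by
    rw [show idxImage B {0} = {Nat.nth (· ∈ B) 0} by simp [idxImage]]
    exact isSchreier_singleton (idxImage_one_le hB hB0 {0} _ (by simp [idxImage]))
  have h1 : 1 ≤ tau1 (idxImage A {0}) := by
    rw [show idxImage A {0} = {Nat.nth (· ∈ A) 0} by simp [idxImage]]
    exact one_le_tau1_singleton (idxImage_one_le hA hA0 {0} _ (by simp [idxImage]))
  calc (1 : ℕ∞) ≤ (tau1 (idxImage A {0}) : ℕ∞) := by exact_mod_cast h1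
    _ ≤ GL1 A B := tau1_le_GL1 hJ

lemma core_cover {L M : Set ℕ} (hLinf : L.Infinite) (hMinf : M.Infinite) (hL0 : 0 ∉ L)
    {p q : ℕ} (hp0 : 0 < p)
    (hp : ∀ J : Finset ℕ, IsSchreier (idxImage M J) → tau1 (idxImage L J) ≤ p)
    (J : Finset ℕ) (hcov : IsChainCover (idxImage M J) q) :
    IsChainCover (idxImage L J) (q * p) := by
  classical
  obtain ⟨G, hGS, hGlt, hGc⟩ := hcov
  set nthM := Nat.nth (· ∈ M) with hnthM
  set nthL := Nat.nth (· ∈ L) with hnthL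
  -- the set of indices of blocks containing nthM j
  set Sset : ℕ → Finset (Fin q) := fun j => Finset.univ.filter (fun i : Fin q => nthM j ∈ G i)
    with hSset
  have hSne : ∀ j ∈ J, (Sset j).Nonempty := by
    intro j hj
    obtain ⟨i, hi⟩ := hGc (nthM j) (Finset.mem_image_of_mem _ hj)
    exact ⟨i, by simp [hSset, hi]⟩
  -- block decomposition of J
  set Jset : Fin q → Finset ℕ :=
    fun i => J.filter (fun j => ∃ h : (Sset j).Nonempty, (Sset j).min' h = i) with hJset
  have hJmem : ∀ i : Fin q, ∀ j ∈ Jset i, j ∈ J ∧ nthM j ∈ G i := by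
    intro i j hj
    rw [hJset, Finset.mem_filter] at hj
    obtain ⟨hjJ, h, hmin⟩ := hj
    refine ⟨hjJ, ?_⟩
    have := (Sset j).min'_mem h
    rw [hmin, hSset] at this
    simpa using this
  have hJcov : ∀ j ∈ J, ∃ i : Fin q, j ∈ Jset i := by
    intro j hj
    refine ⟨(Sset j).min' (hSne j hj), ?_⟩
    rw [hJset, Finset.mem_filter]
    exact ⟨hj, hSne j hj, rfl⟩
  have hord : ∀ i i' : Fin q, i < i' → ∀ j ∈ Jset i, ∀ j' ∈ Jset i', j < j' := by
    intro i i' hii j hj j' hj'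
    have h1 := (hJmem i j hj).2
    have h2 := (hJmem i' j' hj').2
    have := hGlt i i' hii _ h1 _ h2
    exact (Nat.nth_lt_nth hMinf).mp this
  have hSch : ∀ i : Fin q, IsSchreier (idxImage M (Jset i)) := by
    intro i
    refine isSchreier_subset (hGS i) ?_
    intro a ha
    simp only [idxImage, Finset.mem_image] at ha
    obtain ⟨j, hj, rfl⟩ := ha
    exact (hJmem i j hj).2
  have hcovi : ∀ i : Fin q, IsChainCover (idxImage L (Jset i)) p := fun i =>
    isChainCover_of_tau1_le (idxImage_one_le hLinf hL0 _) (hp _ (hSch i))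
  choose Fc hFS hFlt hFcov using hcovi
  set B : Fin q → Finset ℕ := fun i => idxImage L (Jset i) with hB
  have hBlt : ∀ i i' : Fin q, i < i' → FinsetLT (B i) (B i') := by
    intro i i' hii a ha b hb
    simp only [hB, idxImage, Finset.mem_image] at ha hb
    obtain ⟨j, hj, rfl⟩ := ha
    obtain ⟨j', hj', rfl⟩ := hb
    exact (Nat.nth_lt_nth hLinf).mpr (hord i i' hii j hj j' hj')
  have hdiv : ∀ n : Fin (q * p), (n : ℕ) / p < q := fun n =>
    (Nat.div_lt_iff_lt_mul hp0).mpr n.isLt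
  refine ⟨fun n => Fc ⟨(n : ℕ) / p, hdiv n⟩ ⟨(n : ℕ) % p, Nat.mod_lt _ hp0⟩ ∩
      B ⟨(n : ℕ) / p, hdiv n⟩, fun n => ?_, fun n n' hnn => ?_, fun a ha => ?_⟩
  · exact isSchreier_subset (hFS _ _) Finset.inter_subset_left
  · intro a ha b hb
    simp only [Finset.mem_inter] at ha hb
    have hle : (n : ℕ) / p ≤ (n' : ℕ) / p := Nat.div_le_div_right (le_of_lt hnn)
    rcases lt_or_eq_of_le hle with hlt' | heq
    · exact hBlt _ _ hlt' a ha.2 b hb.2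
    · have hmlt : (n : ℕ) % p < (n' : ℕ) % p := by
        have d1 := Nat.div_add_mod (n : ℕ) p
        have d2 := Nat.div_add_mod (n' : ℕ) p
        rw [← heq] at d2
        have hnn' : (n : ℕ) < (n' : ℕ) := hnn
        omega
      have e1 : (⟨(n' : ℕ) / p, hdiv n'⟩ : Fin q) = ⟨(n : ℕ) / p, hdiv n⟩ := Fin.ext heq.symm
      rw [e1] at hb
      exact hFlt _ _ _ hmlt a ha.1 b hb.1
  · simp only [idxImage, Finset.mem_image] at ha
    obtain ⟨j, hj, rfl⟩ := ha
    obtain ⟨i, hji⟩ := hJcov j hj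
    have haB : nthL j ∈ B i := Finset.mem_image_of_mem _ hji
    obtain ⟨k, hk⟩ := hFcov i _ haB
    have hbound : p * (i : ℕ) + (k : ℕ) < q * p := by
      have h1 : p * (i : ℕ) + (k : ℕ) < p * ((i : ℕ) + 1) := by
        have := k.isLt; rw [Nat.mul_succ]; omega
      have h2 : p * ((i : ℕ) + 1) ≤ p * q := Nat.mul_le_mul_left p (Nat.succ_le_of_lt i.isLt)
      calc p * (i : ℕ) + (k : ℕ) < p * ((i : ℕ) + 1) := h1
        _ ≤ p * q := h2
        _ = q * p := Nat.mul_comm p q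
    refine ⟨⟨p * (i : ℕ) + (k : ℕ), hbound⟩, ?_⟩
    have hdiv' : (p * (i : ℕ) + (k : ℕ)) / p = (i : ℕ) := by
      rw [Nat.mul_add_div hp0, Nat.div_eq_of_lt k.isLt, Nat.add_zero]
    have hmod' : (p * (i : ℕ) + (k : ℕ)) % p = (k : ℕ) := by
      rw [Nat.mul_add_mod, Nat.mod_eq_of_lt k.isLt]
    have e1 : (⟨((⟨p * (i : ℕ) + (k : ℕ), hbound⟩ : Fin (q * p)) : ℕ) / p,
        hdiv _⟩ : Fin q) = i := Fin.ext hdiv'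
    have e2 : (⟨((⟨p * (i : ℕ) + (k : ℕ), hbound⟩ : Fin (q * p)) : ℕ) % p,
        Nat.mod_lt _ hp0⟩ : Fin p) = k := Fin.ext hmod'
    rw [Finset.mem_inter, e1, e2]
    exact ⟨hk, haB⟩

end Aux

/-- Submultiplicativity of the Gasparis–Leung index:
`GL₁(L,N) ≤ GL₁(L,M) · GL₁(M,N)` for infinite subsets `L, M, N` of `{1, 2, 3, ...}`. -/
theorem GL1_submultiplicative (L M N : Set ℕ)
    (hL : L.Infinite) (hM : M.Infinite) (hN : N.Infinite)
    (hL0 : 0 ∉ L) (hM0 : 0 ∉ M) (hN0 : 0 ∉ N) :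
    GL1 L N ≤ GL1 L M * GL1 M N := by
  have h1LM : 1 ≤ GL1 L M := one_le_GL1 hL hM hL0 hM0
  have h1MN : 1 ≤ GL1 M N := one_le_GL1 hM hN hM0 hN0
  by_cases hT : GL1 L M = ⊤
  · rw [hT, ENat.top_mul (lt_of_lt_of_le zero_lt_one h1MN).ne']
    exact le_top
  by_cases hT2 : GL1 M N = ⊤
  · rw [hT2, ENat.mul_top (lt_of_lt_of_le zero_lt_one h1LM).ne']
    exact le_top
  obtain ⟨p, hpeq⟩ : ∃ p : ℕ, GL1 L M = (p : ℕ∞) := by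
    obtain ⟨p, hp⟩ := WithTop.ne_top_iff_exists.mp hT
    exact ⟨p, by exact_mod_cast hp.symm⟩
  obtain ⟨q, hqeq⟩ : ∃ q : ℕ, GL1 M N = (q : ℕ∞) := by
    obtain ⟨q, hq⟩ := WithTop.ne_top_iff_exists.mp hT2
    exact ⟨q, by exact_mod_cast hq.symm⟩
  have hp1 : 1 ≤ p := by
    rw [hpeq] at h1LM
    exact_mod_cast h1LM
  have hpJ : ∀ J : Finset ℕ, IsSchreier (idxImage M J) → tau1 (idxImage L J) ≤ p := by
    intro J hJ
    have h := tau1_le_GL1 (A := L) (B := M) hJ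
    rw [hpeq] at h
    exact_mod_cast h
  rw [hpeq, hqeq, GL1]
  apply iSup₂_le
  intro J hJ
  have hJ' : IsSchreier (idxImage N J) := hJ
  have hq' : tau1 (idxImage M J) ≤ q := by
    have h := tau1_le_GL1 (A := M) (B := N) hJ'
    rw [hqeq] at h
    exact_mod_cast h
  have hcv : IsChainCover (idxImage M J) q :=
    isChainCover_of_tau1_le (idxImage_one_le hM hM0 J) hq'
  have hcc : IsChainCover (idxImage L J) (q * p) :=
    core_cover hL hM hL0 hp1 hpJ J hcv
  have ht : tau1 (idxImage L J) ≤ q * p := Nat.sInf_le hcc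
  calc ((tau1 (idxImage L J)) : ℕ∞) ≤ ((q * p : ℕ) : ℕ∞) := Nat.cast_le.mpr ht
    _ = (p : ℕ∞) * (q : ℕ∞) := by push_cast; ring
end

section
/- Let L, M, N be infinite subsets of ℕ with N a spread of M (the j-th element of N is at least the j-th element of M for all j). Then GL₁(L,M) ≤ GL₁(L,N). -/
/-- If `N` is a spread of `M`, then `GL₁(L,M) ≤ GL₁(L,N)`. -/
theorem GL1_le_of_spread (L M N : Set ℕ)
    (hL : L.Infinite) (hM : M.Infinite) (hN : N.Infinite)
    (hL0 : 0 ∉ L) (hM0 : 0 ∉ M) (hN0 : 0 ∉ N)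
    (hspread : ∀ j, Nat.nth (· ∈ M) j ≤ Nat.nth (· ∈ N) j) :
    GL1 L M ≤ GL1 L N := by
  apply iSup₂_le
  intro J hJ
  refine le_iSup₂_of_le J ?_ le_rfl
  -- show IsSchreier (idxImage N J) from IsSchreier (idxImage M J)
  intro hne
  have hMinj : Function.Injective (Nat.nth (· ∈ M)) :=
    Nat.nth_injective hM
  have hNinj : Function.Injective (Nat.nth (· ∈ N)) :=
    Nat.nth_injective hN
  have hJne : J.Nonempty := by
    obtain ⟨x, hx⟩ := hne
    obtain ⟨j, hj, -⟩ := Finset.mem_image.mp hx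
    exact ⟨j, hj⟩
  have hMne : (idxImage M J).Nonempty := by
    obtain ⟨j, hj⟩ := hJne
    exact ⟨_, Finset.mem_image_of_mem _ hj⟩
  have hcard : (idxImage N J).card = (idxImage M J).card := by
    simp [idxImage, Finset.card_image_of_injective _ hMinj,
      Finset.card_image_of_injective _ hNinj]
  rw [hcard]
  refine le_trans (hJ hMne) ?_
  obtain ⟨j, hj, hje⟩ := Finset.mem_image.mp ((idxImage N J).min'_mem hne)
  calc (idxImage M J).min' hMne ≤ Nat.nth (· ∈ M) j :=
        Finset.min'_le _ _ (Finset.mem_image_of_mem _ hj)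
    _ ≤ Nat.nth (· ∈ N) j := hspread j
    _ = (idxImage N J).min' hne := hje
end

section
/- Let M = {m_1 < m_2 < ...} and N = {n_1 < n_2 < ...} be infinite subsets of ℕ such that m_j ≤ n_{j+1} for each j ∈ ℕ. Then GL₁(N,M) ≤ 2. -/
/-- If `M = {m_1 < m_2 < ⋯}` and `N = {n_1 < n_2 < ⋯}` are infinite subsets of `{1,2,...}`
with `m_j ≤ n_{j+1}` for each `j`, then `GL₁(N,M) ≤ 2`. -/
theorem GL1_le_two (M N : Set ℕ)
    (hM : M.Infinite) (hN : N.Infinite) (hM0 : 0 ∉ M) (hN0 : 0 ∉ N)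
    (h : ∀ j, Nat.nth (· ∈ M) j ≤ Nat.nth (· ∈ N) (j + 1)) :
    GL1 N M ≤ 2 := by
  have hMs : (setOf (· ∈ M)).Infinite := hM
  have hNs : (setOf (· ∈ N)).Infinite := hN
  have hmonoN : Monotone (Nat.nth (· ∈ N)) :=
    fun a b hab => (Nat.nth_le_nth hNs).2 hab
  have hmonoM : Monotone (Nat.nth (· ∈ M)) :=
    fun a b hab => (Nat.nth_le_nth hMs).2 hab
  apply iSup₂_le
  intro J hJ
  have : tau1 (idxImage N J) ≤ 2 := by
    apply Nat.sInf_le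
    rcases J.eq_empty_or_nonempty with rfl | hJne
    · exact ⟨fun _ => ∅, fun i hne => absurd hne (by simp),
        fun i j _ a ha => absurd ha (by simp), fun a ha => by simp [idxImage] at ha⟩
    set j0 := J.min' hJne with hj0
    have hF0 : True := trivial
    set F0 : Finset ℕ := {Nat.nth (· ∈ N) j0}
    set F1 : Finset ℕ := idxImage N (J.erase j0)
    -- key: J.card ≤ nth M j0
    have hcard : J.card ≤ Nat.nth (· ∈ M) j0 := by
      have hinj : Set.InjOn (Nat.nth (· ∈ M)) J :=
        fun a _ b _ hab => (Nat.nth_injective hMs) hab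
      have hc : (idxImage M J).card = J.card := Finset.card_image_of_injOn hinj
      have hne' : (idxImage M J).Nonempty := hJne.image _
      have := hJ hne'
      rwa [hc, show (idxImage M J).min' hne' = Nat.nth (· ∈ M) j0 from by
        simpa [idxImage, hj0] using Finset.min'_image hmonoM J hne'] at this
    have hkey : ∀ j ∈ J.erase j0, J.card ≤ Nat.nth (· ∈ N) j := by
      intro j hj
      have hj0lt : j0 < j :=
        lt_of_le_of_ne (J.min'_le j (Finset.mem_of_mem_erase hj))
          (Ne.symm (Finset.ne_of_mem_erase hj))
      calc J.card ≤ Nat.nth (· ∈ M) j0 := hcard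
        _ ≤ Nat.nth (· ∈ N) (j0 + 1) := h j0
        _ ≤ Nat.nth (· ∈ N) j := hmonoN hj0lt
    have hS0 : IsSchreier F0 := by
      intro hne
      have hmem : Nat.nth (· ∈ N) j0 ∈ N := Nat.nth_mem_of_infinite hNs j0
      have h0 : Nat.nth (· ∈ N) j0 ≠ 0 := fun h0 => hN0 (h0 ▸ hmem)
      have hc : F0.card = 1 := Finset.card_singleton _
      have hm : F0.min' hne = Nat.nth (· ∈ N) j0 := Finset.min'_singleton _
      omega
    have hS1 : IsSchreier F1 := by
      intro hne
      have hcard1 : F1.card ≤ J.card - 1 := by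
        calc F1.card ≤ (J.erase j0).card := Finset.card_image_le
          _ = J.card - 1 := Finset.card_erase_of_mem (J.min'_mem hJne)
      have hmin : J.card ≤ F1.min' hne := by
        obtain ⟨j, hj, hje⟩ := Finset.mem_image.1
          (show F1.min' hne ∈ (J.erase j0).image (Nat.nth (· ∈ N)) from F1.min'_mem hne)
        exact hje ▸ hkey j hj
      have hJpos : 0 < J.card := Finset.card_pos.2 hJne
      omega
    have hLT : FinsetLT F0 F1 := by
      intro a ha b hb
      obtain ⟨jb, hjb, hje⟩ := Finset.mem_image.1
        (show b ∈ (J.erase j0).image (Nat.nth (· ∈ N)) from hb)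
      have hj0lt : j0 < jb :=
        lt_of_le_of_ne (J.min'_le jb (Finset.mem_of_mem_erase hjb))
          (Ne.symm (Finset.ne_of_mem_erase hjb))
      rw [Finset.mem_singleton.1 ha, ← hje]
      exact (Nat.nth_lt_nth hNs).2 hj0lt
    refine ⟨![F0, F1], ?_, ?_, ?_⟩
    · intro i
      fin_cases i
      · exact hS0
      · exact hS1
    · intro i j hij
      fin_cases i <;> fin_cases j
      · exact absurd hij (by decide)
      · exact hLT
      · exact absurd hij (by decide)
      · exact absurd hij (by decide)
    · intro a ha
      obtain ⟨j, hj, hje⟩ := Finset.mem_image.1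
        (show a ∈ J.image (Nat.nth (· ∈ N)) from ha)
      rcases eq_or_ne j j0 with rfl | hne
      · exact ⟨0, show a ∈ F0 from Finset.mem_singleton.2 hje.symm⟩
      · refine ⟨1, ?_⟩
        show a ∈ F1
        exact Finset.mem_image.2 ⟨j, Finset.mem_erase.2 ⟨hne, hj⟩, hje⟩
  exact_mod_cast Nat.cast_le.2 this
end

section
/- If N' = {n_{k+1} < n_{k+2} < ...} is obtained from the infinite set N = {n_1 < n_2 < ...} ⊆ ℕ by deleting its first k elements, and J = {j_1 < ... < j_m} is a finite subset of ℕ such that N'(J) is a Schreier set, then τ₁(N(J)) ≤ τ₁({n_1, ..., n_k}) + 1. -/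
/-! Write `j₁ = min J` and split `J` at `s = k + j₁`. The indices of `J` below `s` lie in the
window `[j₁, j₁ + k)`, and shifting them down by `j₁` lands in the first `k` indices. Schreier sets
are closed under subsets and under spreading (replacing elements by larger ones, order preserved),
so the part of `N(J)` indexed below `s` is covered by `τ₁({n_1, …, n_k})` consecutive Schreier
sets. The rest of `N(J)` has at most `|J|` elements, all at least `N(s)`, and `|J| ≤ N(s)` is the
Schreier property of `N'(J)` at its least element `N'(j₁) = N(s)`. -/

open Finset

theorem isSchreier_iff {F : Finset ℕ} : IsSchreier F ↔ ∀ x ∈ F, F.card ≤ x :=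
  ⟨fun h x hx => (h ⟨x, hx⟩).trans (F.min'_le x hx), fun h hF => h _ (F.min'_mem hF)⟩

theorem IsSchreier.mono {F G : Finset ℕ} (hG : IsSchreier G) (hFG : F ⊆ G) : IsSchreier F :=
  isSchreier_iff.2 fun x hx => (card_le_card hFG).trans (isSchreier_iff.1 hG x (hFG hx))

namespace IsChainCover

variable {A B : Finset ℕ} {m : ℕ}

theorem mono (h : IsChainCover B m) (hAB : A ⊆ B) : IsChainCover A m :=
  let ⟨F, hS, hlt, hcov⟩ := h
  ⟨F, hS, hlt, fun a ha => hcov a (hAB ha)⟩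

theorem image_of_le {I : Finset ℕ} {u v : ℕ → ℕ} (h : IsChainCover (I.image u) m)
    (hu : StrictMonoOn u I) (hv : StrictMonoOn v I) (huv : ∀ i ∈ I, u i ≤ v i) :
    IsChainCover (I.image v) m := by
  obtain ⟨F, hS, hlt, hcov⟩ := h
  refine ⟨fun a => {i ∈ I | u i ∈ F a}.image v, fun a => ?_, ?_, ?_⟩
  · refine isSchreier_iff.2 fun y hy => ?_
    obtain ⟨i, hi, rfl⟩ := mem_image.1 hy
    rw [mem_filter] at hi
    have huF : {i ∈ I | u i ∈ F a}.image u ⊆ F a := by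
      intro x hx
      obtain ⟨j, hj, rfl⟩ := mem_image.1 hx
      exact (mem_filter.1 hj).2
    calc ({i ∈ I | u i ∈ F a}.image v).card
        ≤ {i ∈ I | u i ∈ F a}.card := card_image_le
      _ = ({i ∈ I | u i ∈ F a}.image u).card :=
          (card_image_of_injOn (hu.injOn.mono (filter_subset _ _))).symm
      _ ≤ (F a).card := card_le_card huF
      _ ≤ u i := isSchreier_iff.1 (hS a) _ hi.2
      _ ≤ v i := huv i hi.1
  · intro a b hab x hx y hy
    obtain ⟨i, hi, rfl⟩ := mem_image.1 hx
    obtain ⟨j, hj, rfl⟩ := mem_image.1 hy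
    rw [mem_filter] at hi hj
    exact hv hi.1 hj.1 ((hu.lt_iff_lt hi.1 hj.1).1 (hlt a b hab _ hi.2 _ hj.2))
  · intro x hx
    obtain ⟨i, hi, rfl⟩ := mem_image.1 hx
    obtain ⟨a, ha⟩ := hcov (u i) (mem_image_of_mem u hi)
    exact ⟨a, mem_image_of_mem v (mem_filter.2 ⟨hi, ha⟩)⟩

theorem union_of_isSchreier (hA : IsChainCover A m) (hB : IsSchreier B) (hAB : FinsetLT A B) :
    IsChainCover (A ∪ B) (m + 1) := by
  obtain ⟨F, hS, hlt, hcov⟩ := hA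
  refine ⟨Fin.snoc (α := fun _ => Finset ℕ) (fun i => F i ∩ A) B, ?_, ?_, ?_⟩
  · intro i
    induction i using Fin.lastCases with
    | last => simpa using hB
    | cast i => simpa using (hS i).mono inter_subset_left
  · intro i j hij
    induction j using Fin.lastCases with
    | last =>
      obtain ⟨i, rfl⟩ := Fin.exists_castSucc_eq.2 hij.ne
      intro a ha b hb
      simp only [Fin.snoc_castSucc, Fin.snoc_last, mem_inter] at ha hb
      exact hAB a ha.2 b hb
    | cast j =>
      obtain ⟨i, rfl⟩ := Fin.exists_castSucc_eq.2 (hij.trans (Fin.castSucc_lt_last j)).ne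
      intro a ha b hb
      simp only [Fin.snoc_castSucc, mem_inter] at ha hb
      exact hlt i j (Fin.castSucc_lt_castSucc_iff.1 hij) a ha.1 b hb.1
  · intro a ha
    rcases mem_union.1 ha with ha | ha
    · obtain ⟨i, hi⟩ := hcov a ha
      exact ⟨i.castSucc, by simpa using ⟨hi, ha⟩⟩
    · exact ⟨Fin.last m, by simpa using ha⟩

end IsChainCover

theorem isChainCover_of_zero_notMem {A : Finset ℕ} (hA : 0 ∉ A) :
    IsChainCover A (A.sup id + 1) := by
  refine ⟨fun i => {a ∈ A | a = i}, fun i => isSchreier_iff.2 fun x hx => ?_, ?_, ?_⟩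
  · have hsub : {a ∈ A | a = (i : ℕ)} ⊆ {(i : ℕ)} := fun a ha => by simp [(mem_filter.1 ha).2]
    have hx0 : x ≠ 0 := fun h => hA (h ▸ (mem_filter.1 hx).1)
    exact (card_le_card hsub).trans (by simpa [Nat.one_le_iff_ne_zero] using hx0)
  · intro i j hij a ha b hb
    rw [(mem_filter.1 ha).2, (mem_filter.1 hb).2]
    exact hij
  · intro a ha
    exact ⟨⟨a, Nat.lt_succ_of_le (le_sup (f := id) ha)⟩, mem_filter.2 ⟨ha, rfl⟩⟩

theorem tau1_le {A : Finset ℕ} {m : ℕ} (h : IsChainCover A m) : tau1 A ≤ m := Nat.sInf_le h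

theorem isChainCover_tau1 {A : Finset ℕ} (hA : 0 ∉ A) : IsChainCover A (tau1 A) :=
  Nat.sInf_mem (s := {m | IsChainCover A m}) ⟨_, isChainCover_of_zero_notMem hA⟩

theorem isChainCover_image_of_subset_window {n : ℕ → ℕ} (hn : StrictMono n) {I : Finset ℕ}
    {j₀ k m : ℕ} (hI : ∀ j ∈ I, j₀ ≤ j ∧ j < j₀ + k)
    (h : IsChainCover ((range k).image n) m) : IsChainCover (I.image n) m := by
  have hsub : I.image (fun j => n (j - j₀)) ⊆ (range k).image n := by
    intro x hx
    obtain ⟨j, hj, rfl⟩ := mem_image.1 hx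
    exact mem_image_of_mem n (mem_range.2 (by have := hI j hj; omega))
  refine (h.mono hsub).image_of_le (fun a ha b hb hab => hn ?_) (hn.strictMonoOn _)
    fun j _ => hn.monotone (Nat.sub_le j j₀)
  have := hI a ha
  have := hI b hb
  omega

theorem zero_notMem_idxImage {N : Set ℕ} (hN : N.Infinite) (hN0 : 0 ∉ N) (J : Finset ℕ) :
    0 ∉ idxImage N J := by
  intro h
  obtain ⟨j, -, hj⟩ := mem_image.1 h
  exact hN0 (hj ▸ Nat.nth_mem_of_infinite hN j)

theorem nth_sdiff_idxImage_range_le {N : Set ℕ} (hN : N.Infinite) (k i : ℕ) :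
    Nat.nth (· ∈ N \ ↑(idxImage N (range k))) i ≤ Nat.nth (· ∈ N) (k + i) := by
  have hn : StrictMono (fun i => Nat.nth (· ∈ N) (k + i)) :=
    (Nat.nth_strictMono hN).comp (strictMono_id.const_add k)
  refine Nat.nth_le_of_strictMonoOn_of_mapsTo _ (fun i _ => ?_) (hn.strictMonoOn _)
  refine ⟨Nat.nth_mem_of_infinite hN _, fun hmem => ?_⟩
  obtain ⟨j, hj, hji⟩ := mem_image.1 (mem_coe.1 hmem)
  have := Nat.nth_injective hN hji
  have := mem_range.1 hj
  omega

theorem card_le_nth_add_of_isSchreier {N : Set ℕ} (hN : N.Infinite) {k : ℕ} {J : Finset ℕ}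
    (h : IsSchreier (idxImage (N \ ↑(idxImage N (range k))) J)) {j : ℕ} (hj : j ∈ J) :
    J.card ≤ Nat.nth (· ∈ N) (k + j) := by
  have hN' : (N \ ↑(idxImage N (range k))).Infinite := hN.sdiff (finite_toSet _)
  calc J.card = (idxImage (N \ ↑(idxImage N (range k))) J).card :=
        (card_image_of_injective J (Nat.nth_injective hN')).symm
    _ ≤ Nat.nth (· ∈ N \ ↑(idxImage N (range k))) j :=
        isSchreier_iff.1 h _ (mem_image_of_mem _ hj)
    _ ≤ Nat.nth (· ∈ N) (k + j) := nth_sdiff_idxImage_range_le hN k j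

theorem tau1_delete_first_general (N : Set ℕ) (hN : N.Infinite) (hN0 : 0 ∉ N) (k : ℕ)
    (J : Finset ℕ)
    (hSchreier : IsSchreier (idxImage (N \ ↑(idxImage N (Finset.range k))) J)) :
    tau1 (idxImage N J) ≤ tau1 (idxImage N (Finset.range k)) + 1 := by
  obtain rfl | hJ := J.eq_empty_or_nonempty
  · calc tau1 (idxImage N ∅) ≤ 1 := by
          simpa [idxImage] using tau1_le (isChainCover_of_zero_notMem (notMem_empty 0))
      _ ≤ _ := Nat.le_add_left 1 _
  set n := Nat.nth (· ∈ N)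
  have hn : StrictMono n := Nat.nth_strictMono hN
  set s := k + J.min' hJ with hs
  have hcard : J.card ≤ n s := card_le_nth_add_of_isSchreier hN hSchreier (J.min'_mem hJ)
  have hlow : IsChainCover ({j ∈ J | j < s}.image n) (tau1 (idxImage N (range k))) :=
    isChainCover_image_of_subset_window hn (j₀ := J.min' hJ)
      (fun j hj => ⟨J.min'_le j (mem_filter.1 hj).1, by have := (mem_filter.1 hj).2; omega⟩)
      (isChainCover_tau1 (zero_notMem_idxImage hN hN0 _))
  have hhigh : IsSchreier ({j ∈ J | ¬j < s}.image n) := by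
    refine isSchreier_iff.2 fun x hx => ?_
    obtain ⟨j, hj, rfl⟩ := mem_image.1 hx
    calc ({j ∈ J | ¬j < s}.image n).card ≤ J.card := card_image_le.trans (card_filter_le _ _)
      _ ≤ n s := hcard
      _ ≤ n j := hn.monotone (not_lt.1 (mem_filter.1 hj).2)
  have hsplit : FinsetLT ({j ∈ J | j < s}.image n) ({j ∈ J | ¬j < s}.image n) := by
    intro a ha b hb
    obtain ⟨i, hi, rfl⟩ := mem_image.1 ha
    obtain ⟨j, hj, rfl⟩ := mem_image.1 hb
    exact hn (lt_of_lt_of_le (mem_filter.1 hi).2 (not_lt.1 (mem_filter.1 hj).2))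
  have := tau1_le (hlow.union_of_isSchreier hhigh hsplit)
  rwa [← image_union, filter_union_filter_not_eq] at this

/-- If `N' = {n_{k+1} < n_{k+2} < ⋯}` is obtained from the infinite set
`N = {n_1 < n_2 < ⋯} ⊆ {1,2,...}` by deleting its first `k` elements, and `J` is a finite
set of indices such that `N'(J)` is a Schreier set, then
`τ₁(N(J)) ≤ τ₁({n_1, …, n_k}) + 1`. -/
theorem tau1_delete_first (N : Set ℕ) (hN : N.Infinite) (hN0 : 0 ∉ N) (k : ℕ)
    (J : Finset ℕ) (hJ : J.Nonempty)
    (hSchreier : IsSchreier (idxImage (N \ ↑(idxImage N (Finset.range k))) J)) :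
    tau1 (idxImage N J) ≤ tau1 (idxImage N (Finset.range k)) + 1 :=
  tau1_delete_first_general N hN hN0 k J hSchreier
end

section
/- For 1 < p < ∞ and each k ≥ 1, the element Σ_{n=2^{k-1}}^{2^k - 1} e_n has B_p-norm exactly 2^{k-1}. -/
/-- A Schreier chain: a finite collection of nonempty, pairwise consecutive Schreier sets. -/
def IsSchreierChain (C : Finset (Finset ℕ)) : Prop :=
  (∀ F ∈ C, F.Nonempty ∧ IsSchreier F) ∧
    ∀ F ∈ C, ∀ G ∈ C, F ≠ G → FinsetLT F G ∨ FinsetLT G F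

/-- The Baernstein norm: `‖x‖_{B_p} = sup_𝒞 (∑_{F ∈ 𝒞} (∑_{n ∈ F} |x n|)^p)^(1/p)`,
the supremum being over all Schreier chains `𝒞`. -/
noncomputable def baernsteinNorm (p : ℝ) (x : ℕ → ℝ) : ℝ :=
  ⨆ C : {C : Finset (Finset ℕ) // IsSchreierChain C},
    (∑ F ∈ C.1, (∑ n ∈ F, |x n|) ^ p) ^ (1 / p)

/-- For `p ≥ 1` and nonnegative terms, `∑ aᵢ^p ≤ (∑ aᵢ)^p`. -/
lemma aux_sum_rpow_le_rpow_sum {ι : Type*} (s : Finset ι) (f : ι → ℝ)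
    (hf : ∀ i ∈ s, 0 ≤ f i) {p : ℝ} (hp : 1 ≤ p) :
    ∑ i ∈ s, f i ^ p ≤ (∑ i ∈ s, f i) ^ p := by
  set S := ∑ i ∈ s, f i with hS
  have hS0 : 0 ≤ S := Finset.sum_nonneg hf
  have hp0 : p ≠ 0 := by linarith
  have hsplit : ∀ x : ℝ, 0 ≤ x → x ^ p = x * x ^ (p - 1) := by
    intro x hx
    have : x ^ (1 + (p - 1)) = x ^ (1 : ℝ) * x ^ (p - 1) :=
      Real.rpow_add' hx (by simpa using hp0)
    simpa [Real.rpow_one] using this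
  calc ∑ i ∈ s, f i ^ p ≤ ∑ i ∈ s, f i * S ^ (p - 1) := by
        refine Finset.sum_le_sum fun i hi => ?_
        rw [hsplit _ (hf i hi)]
        refine mul_le_mul_of_nonneg_left ?_ (hf i hi)
        exact Real.rpow_le_rpow (hf i hi) (Finset.single_le_sum hf hi) (by linarith)
    _ = S * S ^ (p - 1) := by rw [← Finset.sum_mul]
    _ = S ^ p := (hsplit S hS0).symm

/-- For `1 < p < ∞` and `k ≥ 1`, the element `∑_{n = 2^(k-1)}^{2^k - 1} e_n` has
`B_p`-norm exactly `2^(k-1)`. -/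
theorem baernsteinNorm_dyadic_block (p : ℝ) (hp : 1 < p) (k : ℕ) (hk : 1 ≤ k) :
    baernsteinNorm p (∑ n ∈ Finset.Ico (2 ^ (k - 1)) (2 ^ k), (Pi.single n 1 : ℕ → ℝ))
      = (2 : ℝ) ^ (k - 1) := by
  classical
  set I : Finset ℕ := Finset.Ico (2 ^ (k - 1)) (2 ^ k) with hI
  set x : ℕ → ℝ := ∑ n ∈ I, (Pi.single n 1 : ℕ → ℝ) with hxdef
  have hp0 : (0 : ℝ) < p := by linarith
  have hp0' : p ≠ 0 := ne_of_gt hp0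
  have htwo : 2 ^ k = 2 * 2 ^ (k - 1) := by
    conv_lhs => rw [show k = (k - 1) + 1 by omega]
    ring
  have hIcard : I.card = 2 ^ (k - 1) := by
    rw [hI, Nat.card_Ico]; omega
  -- x evaluated pointwise
  have hx : ∀ m, x m = if m ∈ I then (1 : ℝ) else 0 := by
    intro m
    simp [hxdef, Finset.sum_apply, Pi.single_apply, Finset.sum_ite_eq]
  -- sum of |x| over any finset
  have hsum : ∀ F : Finset ℕ, ∑ n ∈ F, |x n| = ((F ∩ I).card : ℝ) := by
    intro F
    have : ∀ n, |x n| = if n ∈ I then (1 : ℝ) else 0 := by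
      intro n; rw [hx n]; split <;> simp
    simp only [this, Finset.sum_ite_mem, Finset.sum_const, nsmul_eq_mul, mul_one]
  set B : ℝ := (2 : ℝ) ^ (k - 1) with hB
  have hB0 : 0 ≤ B := by positivity
  have hBp : (B ^ p) ^ (1 / p) = B := by
    rw [← Real.rpow_mul hB0, mul_one_div, div_self hp0', Real.rpow_one]
  -- the value of the sup-expression on any chain
  have hval : ∀ C : {C : Finset (Finset ℕ) // IsSchreierChain C},
      (∑ F ∈ C.1, (∑ n ∈ F, |x n|) ^ p) ^ (1 / p) ≤ B := by
    rintro ⟨C, hC⟩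
    have hdisj : ∀ F ∈ C, ∀ G ∈ C, F ≠ G → Disjoint (F ∩ I) (G ∩ I) := by
      intro F hF G hG hFG
      rcases hC.2 F hF G hG hFG with h | h
      · rw [Finset.disjoint_left]
        intro a haF haG
        exact lt_irrefl a (h a (Finset.mem_of_mem_inter_left haF) a
          (Finset.mem_of_mem_inter_left haG))
      · rw [Finset.disjoint_left]
        intro a haF haG
        exact lt_irrefl a (h a (Finset.mem_of_mem_inter_left haG) a
          (Finset.mem_of_mem_inter_left haF))
    have hcards : ∑ F ∈ C, (F ∩ I).card ≤ I.card := by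
      rw [← Finset.card_biUnion hdisj]
      exact Finset.card_le_card (by
        intro a ha
        rcases Finset.mem_biUnion.1 ha with ⟨F, _, haF⟩
        exact Finset.mem_of_mem_inter_right haF)
    have hcardsR : ∑ F ∈ C, ((F ∩ I).card : ℝ) ≤ B := by
      rw [← Nat.cast_sum]
      calc ((∑ F ∈ C, (F ∩ I).card : ℕ) : ℝ) ≤ (I.card : ℝ) := by exact_mod_cast hcards
        _ = B := by rw [hIcard, hB]; push_cast; ring
    have key : ∑ F ∈ C, (∑ n ∈ F, |x n|) ^ p ≤ B ^ p := by
      calc ∑ F ∈ C, (∑ n ∈ F, |x n|) ^ p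
          ≤ (∑ F ∈ C, ∑ n ∈ F, |x n|) ^ p :=
            aux_sum_rpow_le_rpow_sum C _ (fun F _ => Finset.sum_nonneg fun n _ => abs_nonneg _)
              (le_of_lt hp)
        _ ≤ B ^ p := by
            refine Real.rpow_le_rpow (Finset.sum_nonneg fun F _ =>
              Finset.sum_nonneg fun n _ => abs_nonneg _) ?_ (le_of_lt hp0)
            simpa only [hsum] using hcardsR
    calc (∑ F ∈ C, (∑ n ∈ F, |x n|) ^ p) ^ (1 / p)
        ≤ (B ^ p) ^ (1 / p) := Real.rpow_le_rpow
          (Finset.sum_nonneg fun F _ => Real.rpow_nonneg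
            (Finset.sum_nonneg fun n _ => abs_nonneg _) p) key (by positivity)
      _ = B := hBp
  have hbdd : BddAbove (Set.range fun C : {C : Finset (Finset ℕ) // IsSchreierChain C} =>
      (∑ F ∈ C.1, (∑ n ∈ F, |x n|) ^ p) ^ (1 / p)) := by
    refine ⟨B, ?_⟩
    rintro _ ⟨C, rfl⟩
    exact hval C
  -- the chain {I}
  have hInonempty : I.Nonempty := by
    rw [hI]
    have hpos : 0 < 2 ^ (k - 1) := pow_pos (by norm_num) _
    exact Finset.nonempty_Ico.2 (by omega)
  have hchain : IsSchreierChain {I} := by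
    constructor
    · intro F hF
      rw [Finset.mem_singleton] at hF
      subst hF
      refine ⟨hInonempty, ?_⟩
      intro h
      have hmem := Finset.min'_mem I h
      have hmem2 : 2 ^ (k - 1) ≤ I.min' h := (Finset.mem_Ico.mp hmem).1
      exact le_trans (le_of_eq hIcard) hmem2
    · intro F hF G hG hFG
      rw [Finset.mem_singleton] at hF hG
      exact absurd (hF.trans hG.symm) hFG
  haveI : Nonempty {C : Finset (Finset ℕ) // IsSchreierChain C} := ⟨⟨{I}, hchain⟩⟩
  refine le_antisymm (ciSup_le hval) ?_
  have := le_ciSup hbdd (⟨{I}, hchain⟩ : {C : Finset (Finset ℕ) // IsSchreierChain C})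
  refine le_trans ?_ this
  rw [Finset.sum_singleton, hsum, Finset.inter_self, hIcard]
  rw [show ((2 ^ (k-1) : ℕ) : ℝ) = B by rw [hB]; push_cast; ring, hBp]
end

section
/- Let (x_n) be a norm-bounded unconditional basis for a Banach space X that is not weakly null. Then (x_n) admits a subsequence equivalent to the unit vector basis for ℓ₁. -/
private lemma mySignMulSelf (r : ℝ) : Real.sign r * r = |r| := by
  rcases lt_trichotomy r 0 with h | h | h
  · rw [Real.sign_of_neg h, abs_of_neg h]; ring
  · simp [h]
  · rw [Real.sign_of_pos h, abs_of_pos h]; ring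

private lemma myAbsSignLeOne (r : ℝ) : |Real.sign r| ≤ 1 := by
  rcases lt_trichotomy r 0 with h | h | h
  · rw [Real.sign_of_neg h]; norm_num
  · simp [h]
  · rw [Real.sign_of_pos h]; norm_num

/-- A norm-bounded unconditional basic sequence (here encoded via an unconditional
constant `K`) in a Banach space that is not weakly null admits a subsequence equivalent
to the unit vector basis of `ℓ₁`. -/
theorem exists_subseq_equiv_l1 {X : Type*} [NormedAddCommGroup X] [NormedSpace ℝ X]
    [CompleteSpace X] (x : ℕ → X)
    (B : ℝ) (hB : ∀ j, ‖x j‖ ≤ B)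
    (K : ℝ) (hK : ∀ (s : Finset ℕ) (α σ : ℕ → ℝ), (∀ j, |σ j| ≤ 1) →
      ‖∑ j ∈ s, (σ j * α j) • x j‖ ≤ K * ‖∑ j ∈ s, α j • x j‖)
    (hnwn : ¬ ∀ f : X →L[ℝ] ℝ,
      Filter.Tendsto (fun j => f (x j)) Filter.atTop (nhds 0)) :
    ∃ k : ℕ → ℕ, StrictMono k ∧ ∃ c > 0, ∃ C > 0,
      ∀ (s : Finset ℕ) (α : ℕ → ℝ),
        c * ∑ j ∈ s, |α j| ≤ ‖∑ j ∈ s, α j • x (k j)‖ ∧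
        ‖∑ j ∈ s, α j • x (k j)‖ ≤ C * ∑ j ∈ s, |α j| := by
  push_neg at hnwn
  obtain ⟨f, hf⟩ := hnwn
  rw [Metric.tendsto_atTop] at hf
  push_neg at hf
  obtain ⟨ε, hε, hfreq⟩ := hf
  simp only [Real.dist_eq, sub_zero] at hfreq
  obtain ⟨k, hkmono, hke⟩ := Filter.extraction_of_frequently_atTop
    (Filter.frequently_atTop.2 hfreq)
  -- basic positivity facts
  have hx0 : ε ≤ |f (x (k 0))| := hke 0
  have hxne : x (k 0) ≠ 0 := by
    intro h
    rw [h] at hx0; simp at hx0; linarith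
  have hxpos : 0 < ‖x (k 0)‖ := norm_pos_iff.2 hxne
  have hfpos : 0 < ‖f‖ := by
    by_contra h
    push_neg at h
    have : ‖f‖ = 0 := le_antisymm h (norm_nonneg f)
    have h2 : |f (x (k 0))| ≤ ‖f‖ * ‖x (k 0)‖ := f.le_opNorm _
    rw [this, zero_mul] at h2
    linarith
  have hKpos : 0 < K := by
    have := hK {k 0} (fun _ => 1) (fun _ => 1) (fun _ => by norm_num)
    simp only [Finset.sum_singleton, one_mul, one_smul] at this
    nlinarith
  refine ⟨k, hkmono, ε / (K * ‖f‖), by positivity, B, by linarith [hB (k 0)], ?_⟩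
  intro s α
  have hinj : Function.Injective k := hkmono.injective
  set g : ℕ → ℝ := Function.extend k α 0 with hg
  have hgk : ∀ j, g (k j) = α j := fun j => hinj.extend_apply α 0 j
  have hsum_eq : ∑ j ∈ s, α j • x (k j) = ∑ m ∈ s.image k, g m • x m := by
    rw [Finset.sum_image (fun a _ b _ h => hinj h)]
    exact Finset.sum_congr rfl fun j _ => by rw [hgk]
  constructor
  · -- lower bound
    set σ : ℕ → ℝ := fun m => Real.sign (g m * f (x m)) with hσ
    have hkey := hK (s.image k) g σ (fun m => myAbsSignLeOne _)
    have hfV : f (∑ m ∈ s.image k, (σ m * g m) • x m)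
        = ∑ m ∈ s.image k, |g m * f (x m)| := by
      rw [map_sum]
      refine Finset.sum_congr rfl fun m _ => ?_
      rw [f.map_smul, smul_eq_mul]
      show σ m * g m * f (x m) = _
      rw [hσ]; dsimp only; rw [mul_assoc]; exact mySignMulSelf _
    have h1 : ε * ∑ j ∈ s, |α j| ≤ ∑ m ∈ s.image k, |g m * f (x m)| := by
      rw [Finset.sum_image (fun a _ b _ h => hinj h), Finset.mul_sum]
      refine Finset.sum_le_sum fun j _ => ?_
      rw [hgk, abs_mul]
      calc ε * |α j| = |α j| * ε := by ring
        _ ≤ |α j| * |f (x (k j))| := by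
            exact mul_le_mul_of_nonneg_left (hke j) (abs_nonneg _)
    have h2 : ∑ m ∈ s.image k, |g m * f (x m)|
        ≤ ‖f‖ * (K * ‖∑ m ∈ s.image k, g m • x m‖) := by
      rw [← hfV]
      calc f (∑ m ∈ s.image k, (σ m * g m) • x m)
          ≤ |f (∑ m ∈ s.image k, (σ m * g m) • x m)| := le_abs_self _
        _ ≤ ‖f‖ * ‖∑ m ∈ s.image k, (σ m * g m) • x m‖ := f.le_opNorm _
        _ ≤ ‖f‖ * (K * ‖∑ m ∈ s.image k, g m • x m‖) :=
            mul_le_mul_of_nonneg_left hkey (norm_nonneg f)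
    rw [hsum_eq]
    rw [div_mul_eq_mul_div, div_le_iff₀ (by positivity)]
    calc ε * ∑ j ∈ s, |α j| ≤ ‖f‖ * (K * ‖∑ m ∈ s.image k, g m • x m‖) :=
          le_trans h1 h2
      _ = ‖∑ m ∈ s.image k, g m • x m‖ * (K * ‖f‖) := by ring
  · -- upper bound
    calc ‖∑ j ∈ s, α j • x (k j)‖ ≤ ∑ j ∈ s, ‖α j • x (k j)‖ := norm_sum_le _ _
      _ = ∑ j ∈ s, |α j| * ‖x (k j)‖ := by
          simp [norm_smul, Real.norm_eq_abs]
      _ ≤ ∑ j ∈ s, |α j| * B := Finset.sum_le_sum fun j _ =>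
          mul_le_mul_of_nonneg_left (hB (k j)) (abs_nonneg _)
      _ = B * ∑ j ∈ s, |α j| := by rw [← Finset.sum_mul]; ring
end

section
/- Milman's flat-vector lemma: Let W be a nonzero subspace of c₀ and let n ≤ dim W be a natural number. Then W contains a vector w with ‖w‖_∞ = 1 such that the set {j ∈ ℕ : |w(j)| = 1} has cardinality at least n. -/
/-!
Induct on `n`, starting from `w = 0`. The flat set `F = {j | |w j| = 1}` of a vector `w` of
`c₀` is finite; if it has fewer than `dim W` elements, some `v ≠ 0` in `W` vanishes on `F`.
The parameters `t ≥ 0` with `‖w + t • v‖∞ ≤ 1` form a closed bounded set; at its supremum some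
coordinate outside `F` has modulus `1`. Otherwise `w + t • v`, being in `c₀`, stays uniformly
below `1` on the support of `v`, and `t` could be increased.
-/

open Filter Topology

lemma Submodule.exists_ne_zero_forall_eq_zero_of_card_lt_rank {K ι : Type*} [Field K]
    (W : Submodule K (ι → K)) (F : Finset ι) (hF : (F.card : Cardinal) < Module.rank K W) :
    ∃ v ∈ W, v ≠ 0 ∧ ∀ j ∈ F, v j = 0 := by
  set restrict : W →ₗ[K] (F → K) := (LinearMap.funLeft K K ((↑) : F → ι)).comp W.subtype
  have hker : LinearMap.ker restrict ≠ ⊥ := by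
    intro h
    have := restrict.rank_le_of_injective (LinearMap.ker_eq_bot.mp h)
    rw [rank_fun', Fintype.card_coe] at this
    exact hF.not_ge this
  obtain ⟨⟨v, hvW⟩, hv, hv0⟩ := (Submodule.ne_bot_iff _).mp hker
  refine ⟨v, hvW, fun h => hv0 (Subtype.ext h), fun j hj => ?_⟩
  exact congrFun (LinearMap.mem_ker.mp hv) ⟨j, hj⟩

section TendstoZero

variable {u v : ℕ → ℝ}

lemma finite_setOf_le_abs_of_tendsto_zero (hu : Tendsto u atTop (𝓝 0)) {ε : ℝ} (hε : 0 < ε) :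
    {j | ε ≤ |u j|}.Finite := by
  have h : ∀ᶠ j in cofinite, |u j| < ε := by
    rw [Nat.cofinite_eq_atTop]
    exact ((tendsto_zero_iff_abs_tendsto_zero u).mp hu).eventually (gt_mem_nhds hε)
  simpa only [eventually_cofinite, not_lt] using h

lemma exists_lt_one_forall_abs_le (hu : Tendsto u atTop (𝓝 0)) {S : Set ℕ}
    (hS : ∀ j ∈ S, |u j| < 1) : ∃ θ < 1, ∀ j ∈ S, |u j| ≤ θ := by
  set T := S ∩ {j | 1 / 2 ≤ |u j|}
  have hT : T.Finite := (finite_setOf_le_abs_of_tendsto_zero hu one_half_pos).inter_of_right S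
  have hθ : ∀ᶠ θ in 𝓝[<] (1 : ℝ), θ ∈ Set.Ioo (1 / 2) 1 ∧ ∀ j ∈ T, |u j| < θ := by
    refine Filter.Eventually.and (Ioo_mem_nhdsLT (by norm_num))
      ((eventually_all_finite hT).mpr fun j hj => ?_)
    filter_upwards [Ioo_mem_nhdsLT (hS j hj.1)] with θ hθ using hθ.1
  obtain ⟨θ, ⟨hθ₁, hθ₂⟩, hθT⟩ := hθ.exists
  refine ⟨θ, hθ₂, fun j hj => ?_⟩
  by_cases hj' : 1 / 2 ≤ |u j|
  · exact (hθT j ⟨hj, hj'⟩).le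
  · linarith

lemma exists_pos_forall_abs_add_mul_le_one (hu : Tendsto u atTop (𝓝 0))
    (hv : BddAbove (Set.range fun j => |v j|)) (hu1 : ∀ j, |u j| ≤ 1)
    (huv : ∀ j, v j ≠ 0 → |u j| < 1) : ∃ δ > 0, ∀ j, |u j + δ * v j| ≤ 1 := by
  obtain ⟨θ, hθ, hθv⟩ := exists_lt_one_forall_abs_le hu (S := {j | v j ≠ 0}) huv
  obtain ⟨C, hC⟩ := hv
  have hC0 : 0 ≤ C := (abs_nonneg (v 0)).trans (hC ⟨0, rfl⟩)
  set δ := (1 - θ) / (C + 1)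
  have hδ : 0 < δ := div_pos (by linarith) (by linarith)
  refine ⟨δ, hδ, fun j => ?_⟩
  by_cases hj : v j = 0
  · simpa [hj] using hu1 j
  have hδv : δ * |v j| ≤ 1 - θ := by
    rw [div_mul_eq_mul_div, div_le_iff₀ (by linarith)]
    nlinarith [hC ⟨j, rfl⟩]
  calc |u j + δ * v j| ≤ |u j| + δ * |v j| := by
        simpa only [abs_mul, abs_of_pos hδ] using abs_add_le (u j) (δ * v j)
    _ ≤ θ + (1 - θ) := add_le_add (hθv j hj) hδv
    _ = 1 := add_sub_cancel _ _

lemma exists_abs_add_mul_eq_one (hu : Tendsto u atTop (𝓝 0)) (hv : Tendsto v atTop (𝓝 0))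
    (hu1 : ∀ j, |u j| ≤ 1) (hv0 : v ≠ 0) (huv : ∀ j, |u j| = 1 → v j = 0) :
    ∃ t : ℝ, (∀ j, |u j + t * v j| ≤ 1) ∧ ∃ j, |u j| ≠ 1 ∧ |u j + t * v j| = 1 := by
  obtain ⟨j₀, hj₀⟩ := Function.ne_iff.mp hv0
  set A := {t : ℝ | 0 ≤ t ∧ ∀ j, |u j + t * v j| ≤ 1}
  have hA0 : (0 : ℝ) ∈ A := ⟨le_rfl, by simpa using hu1⟩
  have hAbdd : BddAbove A := by
    refine ⟨2 / |v j₀|, fun t ⟨ht, htv⟩ => ?_⟩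
    rw [le_div_iff₀ (abs_pos.mpr hj₀), ← abs_of_nonneg ht, ← abs_mul]
    calc |t * v j₀| = |(u j₀ + t * v j₀) - u j₀| := by ring_nf
      _ ≤ |u j₀ + t * v j₀| + |u j₀| := abs_sub _ _
      _ ≤ 2 := by linarith [htv j₀, hu1 j₀]
  have hAclosed : IsClosed A := by
    simp only [A, Set.ofPred_and, Set.ofPred_forall]
    exact isClosed_Ici.inter (isClosed_iInter fun j => isClosed_le (by fun_prop) continuous_const)
  obtain ⟨ht₀, ht₀1⟩ : sSup A ∈ A := hAclosed.csSup_mem ⟨0, hA0⟩ hAbdd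
  refine ⟨sSup A, ht₀1, ?_⟩
  by_contra! h
  have hlim : Tendsto (fun j => u j + sSup A * v j) atTop (𝓝 0) := by
    simpa using hu.add (hv.const_mul (sSup A))
  obtain ⟨δ, hδ, hδ1⟩ := exists_pos_forall_abs_add_mul_le_one hlim
    ((tendsto_zero_iff_abs_tendsto_zero v).mp hv).bddAbove_range ht₀1
    fun j hj => (ht₀1 j).lt_of_ne (h j fun h1 => hj (huv j h1))
  have hmem : sSup A + δ ∈ A :=
    ⟨by linarith, fun j => by simpa only [add_mul, add_assoc] using hδ1 j⟩
  linarith [le_csSup hAbdd hmem]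

end TendstoZero

lemma exists_flat_of_le_rank (W : Submodule ℝ (ℕ → ℝ))
    (hc0 : ∀ w ∈ W, Tendsto w atTop (𝓝 0)) :
    ∀ n : ℕ, (n : Cardinal) ≤ Module.rank ℝ W →
      ∃ w ∈ W, (∀ j, |w j| ≤ 1) ∧ ∃ s : Finset ℕ, n ≤ s.card ∧ ∀ j ∈ s, |w j| = 1
  | 0, _ => ⟨0, W.zero_mem, by simp, ∅, le_rfl, by simp⟩
  | n + 1, hn => by
    obtain ⟨w, hwW, hw1, s, hs, hsw⟩ :=
      exists_flat_of_le_rank W hc0 n (le_trans (by exact_mod_cast n.le_succ) hn)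
    set F := (finite_setOf_le_abs_of_tendsto_zero (hc0 w hwW) one_pos).toFinset
    have hF : ∀ j, j ∈ F ↔ |w j| = 1 := fun j => by
      simp [F, (hw1 j).ge_iff_eq', eq_comm]
    have hsF : s.card ≤ F.card := Finset.card_le_card fun j hj => (hF j).mpr (hsw j hj)
    by_cases hFn : n + 1 ≤ F.card
    · exact ⟨w, hwW, hw1, F, hFn, fun j hj => (hF j).mp hj⟩
    obtain ⟨v, hvW, hv0, hvF⟩ := W.exists_ne_zero_forall_eq_zero_of_card_lt_rank F
      (lt_of_lt_of_le (by exact_mod_cast (by omega : F.card < n + 1)) hn)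
    obtain ⟨t, ht1, j, hj, hjt⟩ := exists_abs_add_mul_eq_one (hc0 w hwW) (hc0 v hvW) hw1 hv0
      fun j hj => hvF j ((hF j).mpr hj)
    refine ⟨w + t • v, W.add_mem hwW (W.smul_mem t hvW), ht1, insert j F, ?_, ?_⟩
    · rw [Finset.card_insert_of_notMem ((hF j).not.mpr hj)]
      omega
    · intro i hi
      rcases Finset.mem_insert.mp hi with rfl | hi
      · exact hjt
      · simpa [hvF i hi] using (hF i).mp hi

/-- Milman's flat-vector lemma: a nonzero subspace `W` of `c₀` (realized as a subspace of
sequences tending to `0`, with the supremum norm) of dimension at least `n` contains a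
vector of supremum norm `1` attaining its norm in at least `n` coordinates. -/
theorem milman_flat_vector (W : Submodule ℝ (ℕ → ℝ))
    (hc0 : ∀ w ∈ W, Tendsto w atTop (nhds 0))
    (hW : W ≠ ⊥) (n : ℕ) (hn : (n : Cardinal) ≤ Module.rank ℝ W) :
    ∃ w ∈ W, (∀ j, |w j| ≤ 1) ∧ (∃ j, |w j| = 1) ∧
      ∃ s : Finset ℕ, n ≤ s.card ∧ ∀ j ∈ s, |w j| = 1 := by
  have hW1 : (1 : Cardinal) ≤ Module.rank ℝ W := by
    have := Submodule.nontrivial_iff_ne_bot.mpr hW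
    exact Cardinal.one_le_iff_pos.mpr rank_pos
  have hn1 : ((max n 1 : ℕ) : Cardinal) ≤ Module.rank ℝ W := by
    rw [Nat.mono_cast.map_max, Nat.cast_one]
    exact max_le hn hW1
  obtain ⟨w, hwW, hw1, s, hs, hsw⟩ := exists_flat_of_le_rank W hc0 (max n 1) hn1
  obtain ⟨j, hj⟩ := Finset.card_pos.mp (by omega : 0 < s.card)
  exact ⟨w, hwW, hw1, ⟨j, hsw j hj⟩, s, le_of_max_le_left hs, hsw⟩
end
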